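/- Let f: ℝ → ℝ be continuous on ℝ, C² on ℝ∖{μ} with bounded second derivative there, with jump [f'] := f'(μ⁺) − f'(μ⁻) ≠ 0, and suppose x_j ≤ μ ≤ (x_j + x_{j+1})/2. If h := h_max < h_c := |[f']|/(4 M₂) with M₂ := sup_{ℝ∖{μ}} |f''|, and (x_{j+1}−μ)/(h_j+h_{j+1}) − (μ−x_j)/(h_{j+1}+h_{j+2}) > 1/4, then |D_j f| < |D_{j−1} f|. -/

import Mathlib

open Set Filter

lemma dd_bound (g G : ℝ → ℝ) (hg : ∀ x, HasDerivAt g (G x) x) (M : ℝ)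
    (hLip : ∀ s t : ℝ, |G t - G s| ≤ M * |t - s|)
    (a b c : ℝ) (hab : a < b) (hbc : b < c) :
    |g a / ((b - a) * (c - a)) - g b / ((b - a) * (c - b)) + g c / ((c - b) * (c - a))|
      ≤ M / 2 := by
  have hac : a < c := hab.trans hbc
  have hba : (0:ℝ) < b - a := by linarith
  have hcb : (0:ℝ) < c - b := by linarith
  have hca : (0:ℝ) < c - a := by linarith
  set S : ℝ := (g c - g a) / (c - a) with hS
  set W : ℝ := (b - a) * (c - b) with hW
  have hWpos : 0 < W := mul_pos hba hcb
  set q : ℝ → ℝ := fun x => g x - g a - S * (x - a) with hq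
  set ψ : ℝ → ℝ := fun x => q x - q b * ((x - a) * (c - x)) / W with hψ
  set Ψ : ℝ → ℝ := fun x => G x - S - q b * ((c - x) - (x - a)) / W with hΨ
  have hψd : ∀ x, HasDerivAt ψ (Ψ x) x := by
    intro x
    have h1 : HasDerivAt (fun y : ℝ => (y - a) * (c - y)) ((c - x) - (x - a)) x := by
      have := ((hasDerivAt_id x).sub_const a).mul ((hasDerivAt_const x c).sub (hasDerivAt_id x))
      refine this.congr_deriv ?_
      simp; ring
    have h2 : HasDerivAt q (G x - S) x := by
      have := ((hg x).sub_const (g a)).sub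
        (HasDerivAt.const_mul S ((hasDerivAt_id x).sub_const a))
      refine this.congr_deriv ?_
      ring
    have := h2.sub ((HasDerivAt.const_mul (q b) h1).div_const W)
    exact this
  have hψcont : Continuous ψ := by
    rw [continuous_iff_continuousAt]; exact fun x => (hψd x).continuousAt
  have hψa : ψ a = 0 := by simp [hψ, hq]
  have hψb : ψ b = 0 := by
    simp only [hψ]
    rw [← hW]
    field_simp
    ring
  have hψc : ψ c = 0 := by
    have hqc : q c = 0 := by
      simp only [hq, hS]
      field_simp
      ring
    simp [hψ, hqc]
  obtain ⟨ζ₁, hζ₁, hΨ₁⟩ := exists_hasDerivAt_eq_zero hab hψcont.continuousOn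
    (hψa.trans hψb.symm) (fun x _ => hψd x)
  obtain ⟨ζ₂, hζ₂, hΨ₂⟩ := exists_hasDerivAt_eq_zero hbc hψcont.continuousOn
    (hψb.trans hψc.symm) (fun x _ => hψd x)
  have hz : ζ₁ < ζ₂ := hζ₁.2.trans hζ₂.1
  have e1 : G ζ₁ = S + q b * ((c - ζ₁) - (ζ₁ - a)) / W := by
    have := hΨ₁; simp only [hΨ] at this; linarith
  have e2 : G ζ₂ = S + q b * ((c - ζ₂) - (ζ₂ - a)) / W := by
    have := hΨ₂; simp only [hΨ] at this; linarith
  have ediff : G ζ₂ - G ζ₁ = -(q b * (2 * (ζ₂ - ζ₁)) / W) := by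
    rw [e1, e2]; ring
  have habs : |q b| * (2 * (ζ₂ - ζ₁)) / W ≤ M * (ζ₂ - ζ₁) := by
    have h := hLip ζ₁ ζ₂
    rw [ediff, abs_neg, abs_div, abs_mul, abs_of_pos hWpos,
      abs_of_pos (by linarith : (0:ℝ) < 2 * (ζ₂ - ζ₁)),
      abs_of_pos (by linarith : (0:ℝ) < ζ₂ - ζ₁)] at h
    exact h
  have hqb : |q b| ≤ M / 2 * W := by
    have h' := (div_le_iff₀ hWpos).mp habs
    nlinarith [abs_nonneg (q b)]
  have hexpr : g a / ((b - a) * (c - a)) - g b / ((b - a) * (c - b)) + g c / ((c - b) * (c - a))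
      = -(q b) / W := by
    simp only [hq, hS, hW]
    field_simp
    ring
  rw [hexpr, abs_div, abs_neg, abs_of_pos hWpos, div_le_iff₀ hWpos]
  exact hqb


lemma lip_side (f' f'' : ℝ → ℝ) (μ M₂ : ℝ)
    (hd2 : ∀ x ≠ μ, HasDerivAt f' (f'' x) x)
    (hM : ∀ x ≠ μ, |f'' x| ≤ M₂)
    (s : Set ℝ) (hs : Convex ℝ s) (hμ : μ ∉ s) :
    ∀ x ∈ s, ∀ y ∈ s, |f' y - f' x| ≤ M₂ * |y - x| := by
  intro x hx y hy
  have := Convex.norm_image_sub_le_of_norm_hasDerivWithin_le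
    (f' := f'') (fun z hz => (hd2 z (fun h => hμ (h ▸ hz))).hasDerivWithinAt)
    (fun z hz => by simpa [Real.norm_eq_abs] using hM z (fun h => hμ (h ▸ hz))) hs hx hy
  simpa [Real.norm_eq_abs] using this

lemma left_bound (f f' f'' : ℝ → ℝ) (μ M₂ dL : ℝ)
    (hf : Continuous f)
    (hd1 : ∀ x ≠ μ, HasDerivAt f (f' x) x)
    (hd2 : ∀ x ≠ μ, HasDerivAt f' (f'' x) x)
    (hM : ∀ x ≠ μ, |f'' x| ≤ M₂) (hM₂ : 0 ≤ M₂)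
    (hdL : HasDerivWithinAt f dL (Set.Iic μ) μ) :
    ∀ s < μ, |dL - f' s| ≤ M₂ * (μ - s) := by
  intro s hsμ
  have hslope : Tendsto (slope f μ) (nhdsWithin μ (Iio μ)) (nhds dL) := by
    have := hasDerivWithinAt_iff_tendsto_slope.mp hdL
    rwa [Iic_diff_right] at this
  have htend : Tendsto (fun u => |slope f μ u - f' s|) (nhdsWithin μ (Iio μ))
      (nhds (|dL - f' s|)) := ((hslope.sub_const _).abs)
  have hmem : Ioi s ∩ Iio μ ∈ nhdsWithin μ (Iio μ) :=
    Filter.inter_mem (mem_nhdsWithin_of_mem_nhds (Ioi_mem_nhds hsμ)) self_mem_nhdsWithin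
  have hev : ∀ᶠ u in nhdsWithin μ (Iio μ), |slope f μ u - f' s| ≤ M₂ * (μ - s) := by
    filter_upwards [hmem] with u hu
    obtain ⟨hsu, huμ⟩ := hu
    obtain ⟨ξ, hξ, hξeq⟩ := exists_hasDerivAt_eq_slope f f' huμ hf.continuousOn
      (fun x hx => hd1 x (ne_of_lt hx.2))
    have hslopeeq : slope f μ u = f' ξ := by
      rw [slope_def_field, hξeq]
      rw [div_eq_div_iff (by simp [sub_eq_zero]; exact ne_of_lt huμ)
        (by simp [sub_eq_zero]; exact (ne_of_lt huμ).symm)]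
      ring
    rw [hslopeeq]
    have hsξ : s < ξ := hsu.trans hξ.1
    have hlip := lip_side f' f'' μ M₂ hd2 hM (Iio μ) (convex_Iio μ) (by simp) s hsμ ξ hξ.2
    calc |f' ξ - f' s| ≤ M₂ * |ξ - s| := hlip
      _ ≤ M₂ * (μ - s) := by
          rw [abs_of_pos (by linarith : (0:ℝ) < ξ - s)]
          have : ξ - s ≤ μ - s := by linarith [hξ.2]
          exact mul_le_mul_of_nonneg_left this hM₂
  exact le_of_tendsto htend hev

lemma right_bound (f f' f'' : ℝ → ℝ) (μ M₂ dR : ℝ)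
    (hf : Continuous f)
    (hd1 : ∀ x ≠ μ, HasDerivAt f (f' x) x)
    (hd2 : ∀ x ≠ μ, HasDerivAt f' (f'' x) x)
    (hM : ∀ x ≠ μ, |f'' x| ≤ M₂) (hM₂ : 0 ≤ M₂)
    (hdR : HasDerivWithinAt f dR (Set.Ici μ) μ) :
    ∀ t, μ < t → |dR - f' t| ≤ M₂ * (t - μ) := by
  intro t htμ
  have hslope : Tendsto (slope f μ) (nhdsWithin μ (Ioi μ)) (nhds dR) := by
    have := hasDerivWithinAt_iff_tendsto_slope.mp hdR
    rwa [Ici_sdiff_left] at this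
  have htend : Tendsto (fun u => |slope f μ u - f' t|) (nhdsWithin μ (Ioi μ))
      (nhds (|dR - f' t|)) := ((hslope.sub_const _).abs)
  have hmem : Iio t ∩ Ioi μ ∈ nhdsWithin μ (Ioi μ) :=
    Filter.inter_mem (mem_nhdsWithin_of_mem_nhds (Iio_mem_nhds htμ)) self_mem_nhdsWithin
  have hev : ∀ᶠ u in nhdsWithin μ (Ioi μ), |slope f μ u - f' t| ≤ M₂ * (t - μ) := by
    filter_upwards [hmem] with u hu
    obtain ⟨hut, hμu⟩ := hu
    obtain ⟨ξ, hξ, hξeq⟩ := exists_hasDerivAt_eq_slope f f' hμu hf.continuousOn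
      (fun x hx => hd1 x (ne_of_gt hx.1))
    have hslopeeq : slope f μ u = f' ξ := by
      rw [slope_def_field, hξeq]
    rw [hslopeeq]
    have hξt : ξ < t := hξ.2.trans hut
    have hlip := lip_side f' f'' μ M₂ hd2 hM (Ioi μ) (convex_Ioi μ) (by simp)
      t htμ ξ hξ.1
    calc |f' ξ - f' t| ≤ M₂ * |ξ - t| := hlip
      _ ≤ M₂ * (t - μ) := by
          rw [abs_of_neg (by linarith : ξ - t < 0)]
          have : -(ξ - t) ≤ t - μ := by linarith [hξ.1]
          exact mul_le_mul_of_nonneg_left this hM₂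
  exact le_of_tendsto htend hev

noncomputable def Gfun (f' : ℝ → ℝ) (μ dL dR : ℝ) : ℝ → ℝ := fun x =>
  if x < μ then f' x else if μ < x then f' x - (dR - dL) else dL

lemma Gfun_lip (f f' f'' : ℝ → ℝ) (μ M₂ dL dR : ℝ)
    (hf : Continuous f)
    (hd1 : ∀ x ≠ μ, HasDerivAt f (f' x) x)
    (hd2 : ∀ x ≠ μ, HasDerivAt f' (f'' x) x)
    (hM : ∀ x ≠ μ, |f'' x| ≤ M₂) (hM₂ : 0 ≤ M₂)
    (hdL : HasDerivWithinAt f dL (Set.Iic μ) μ)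
    (hdR : HasDerivWithinAt f dR (Set.Ici μ) μ) :
    ∀ s t : ℝ, |Gfun f' μ dL dR t - Gfun f' μ dL dR s| ≤ M₂ * |t - s| := by
  set G := Gfun f' μ dL dR with hG
  have hGlt : ∀ x < μ, G x = f' x := by
    intro x hx; simp [hG, Gfun, hx]
  have hGgt : ∀ x, μ < x → G x = f' x - (dR - dL) := by
    intro x hx; simp [hG, Gfun, not_lt_of_gt hx, hx]
  have hGμ : G μ = dL := by simp [hG, Gfun]
  have hL : ∀ s ≤ μ, |G s - dL| ≤ M₂ * (μ - s) := by
    intro s hs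
    rcases eq_or_lt_of_le hs with rfl | hs'
    · simp [hGμ]
    · rw [hGlt s hs', abs_sub_comm]
      exact left_bound f f' f'' μ M₂ dL hf hd1 hd2 hM hM₂ hdL s hs'
  have hR : ∀ t, μ ≤ t → |G t - dL| ≤ M₂ * (t - μ) := by
    intro t ht
    rcases eq_or_lt_of_le ht with rfl | ht'
    · simp [hGμ]
    · rw [hGgt t ht']
      have := right_bound f f' f'' μ M₂ dR hf hd1 hd2 hM hM₂ hdR t ht'
      rw [abs_sub_comm] at this
      have heq : f' t - (dR - dL) - dL = f' t - dR := by ring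
      rw [heq]; exact this
  suffices h : ∀ s t : ℝ, s ≤ t → |G t - G s| ≤ M₂ * (t - s) by
    intro s t
    rcases le_total s t with hst | hts
    · rw [abs_of_nonneg (by linarith : (0:ℝ) ≤ t - s)]; exact h s t hst
    · rw [abs_of_nonpos (by linarith : t - s ≤ 0), abs_sub_comm]
      have := h t s hts; linarith
  intro s t hst
  rcases lt_trichotomy t μ with htμ | rfl | hμt
  · -- both < μ
    rw [hGlt t htμ, hGlt s (lt_of_le_of_lt hst htμ)]
    have := lip_side f' f'' μ M₂ hd2 hM (Iio μ) (convex_Iio μ) (by simp)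
      s (lt_of_le_of_lt hst htμ) t htμ
    rwa [abs_of_nonneg (by linarith : (0:ℝ) ≤ t - s)] at this
  · -- t = μ
    rw [hGμ, abs_sub_comm]
    exact hL s hst
  · rcases lt_trichotomy μ s with hμs | rfl | hsμ
    · rw [hGgt t hμt, hGgt s hμs]
      have heq : f' t - (dR - dL) - (f' s - (dR - dL)) = f' t - f' s := by ring
      rw [heq]
      have := lip_side f' f'' μ M₂ hd2 hM (Ioi μ) (convex_Ioi μ) (by simp) s hμs t hμt
      rwa [abs_of_nonneg (by linarith : (0:ℝ) ≤ t - s)] at this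
    · rw [hGμ]
      exact hR t (le_of_lt hμt)
    · -- s < μ < t
      calc |G t - G s| ≤ |G t - dL| + |dL - G s| := by
              have := abs_add_le (G t - dL) (dL - G s); simpa using this
        _ ≤ M₂ * (t - μ) + M₂ * (μ - s) := by
              have h1 := hR t (le_of_lt hμt)
              have h2 := hL s (le_of_lt hsμ)
              rw [abs_sub_comm] at h2
              linarith
        _ = M₂ * (t - s) := by ring

lemma g_deriv (f f' : ℝ → ℝ) (μ dL dR : ℝ)
    (hd1 : ∀ x ≠ μ, HasDerivAt f (f' x) x)
    (hdL : HasDerivWithinAt f dL (Set.Iic μ) μ)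
    (hdR : HasDerivWithinAt f dR (Set.Ici μ) μ) :
    ∀ x, HasDerivAt (fun y => f y - (dR - dL) * max (y - μ) 0)
      (Gfun f' μ dL dR x) x := by
  intro x
  rcases lt_trichotomy x μ with hx | heq | hx
  · -- x < μ : locally max = 0
    have hφ : HasDerivAt (fun y : ℝ => max (y - μ) 0) 0 x := by
      have hconst : HasDerivAt (fun _ : ℝ => (0:ℝ)) 0 x := hasDerivAt_const x 0
      apply hconst.congr_of_eventuallyEq
      filter_upwards [Iio_mem_nhds hx] with y hy
      have hy0 : y - μ ≤ 0 := by simp at hy; linarith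
      simp [max_eq_right hy0]
    have := (hd1 x (ne_of_lt hx)).sub (hφ.const_mul (dR - dL))
    exact this.congr_deriv (by simp [Gfun, hx])
  · -- x = μ
    subst heq
    have hLφ : HasDerivWithinAt (fun y : ℝ => max (y - x) 0) 0 (Set.Iic x) x := by
      apply (hasDerivWithinAt_const x (Set.Iic x) (0:ℝ)).congr
      · intro y hy
        exact max_eq_right (by simp at hy; linarith)
      · simp
    have hRφ : HasDerivWithinAt (fun y : ℝ => max (y - x) 0) 1 (Set.Ici x) x := by
      have hid : HasDerivWithinAt (fun y : ℝ => y - x) 1 (Set.Ici x) x :=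
        ((hasDerivAt_id x).sub_const x).hasDerivWithinAt
      apply hid.congr
      · intro y hy
        exact max_eq_left (by simp at hy; linarith)
      · simp
    have hLg : HasDerivWithinAt (fun y => f y - (dR - dL) * max (y - x) 0)
        (dL - (dR - dL) * 0) (Set.Iic x) x := hdL.sub (hLφ.const_mul (dR - dL))
    have hRg : HasDerivWithinAt (fun y => f y - (dR - dL) * max (y - x) 0)
        (dR - (dR - dL) * 1) (Set.Ici x) x := hdR.sub (hRφ.const_mul (dR - dL))
    have hLg' : HasDerivWithinAt (fun y => f y - (dR - dL) * max (y - x) 0)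
        dL (Set.Iic x) x := by simpa using hLg
    have hRg' : HasDerivWithinAt (fun y => f y - (dR - dL) * max (y - x) 0)
        dL (Set.Ici x) x := by
      have h : dR - (dR - dL) * 1 = dL := by ring
      rwa [h] at hRg
    have hU := hLg'.union hRg'
    rw [Set.Iic_union_Ici] at hU
    have h := hasDerivWithinAt_univ.mp hU
    simpa [Gfun] using h
  · -- μ < x
    have hφ : HasDerivAt (fun y : ℝ => max (y - μ) 0) 1 x := by
      have hid : HasDerivAt (fun y : ℝ => y - μ) 1 x := (hasDerivAt_id x).sub_const μ
      apply hid.congr_of_eventuallyEq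
      filter_upwards [Ioi_mem_nhds hx] with y hy
      have hy0 : (0:ℝ) ≤ y - μ := by simp at hy; linarith
      simp [max_eq_left hy0]
    have hder := (hd1 x (ne_of_gt hx)).sub (hφ.const_mul (dR - dL))
    have heq2 : Gfun f' μ dL dR x = f' x - (dR - dL) * 1 := by
      simp [Gfun, not_lt_of_gt hx, hx]
    rw [heq2]
    exact hder



/-- Second order divided difference on the nodes `X i, X (i+1), X (i+2)`. -/
noncomputable def Dd (X : ℤ → ℝ) (f : ℝ → ℝ) (i : ℤ) : ℝ :=
    f (X i) / ((X (i + 1) - X i) * (X (i + 2) - X i))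
  - f (X (i + 1)) / ((X (i + 1) - X i) * (X (i + 2) - X (i + 1)))
  + f (X (i + 2)) / ((X (i + 2) - X (i + 1)) * (X (i + 2) - X i))

/-- If `x_j ≤ μ ≤ (x_j + x_{j+1})/2`, `h_max < h_c := |[f']|/(4M₂)` and
`(x_{j+1} − μ)/(h_j + h_{j+1}) − (μ − x_j)/(h_{j+1} + h_{j+2}) > 1/4`,
then `|D_j f| < |D_{j−1} f|`. -/
theorem statement12 (X : ℤ → ℝ) (hX : StrictMono X) (hmax : ℝ)
    (hhi : ∀ i : ℤ, X i - X (i - 1) ≤ hmax)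
    (f f' f'' : ℝ → ℝ) (μ : ℝ)
    (hf : Continuous f)
    (hd1 : ∀ x ≠ μ, HasDerivAt f (f' x) x)
    (hd2 : ∀ x ≠ μ, HasDerivAt f' (f'' x) x)
    (hc2 : ContinuousOn f'' {μ}ᶜ)
    (M₂ : ℝ) (hM : ∀ x ≠ μ, |f'' x| ≤ M₂)
    (dL dR : ℝ)
    (hdL : HasDerivWithinAt f dL (Set.Iic μ) μ)
    (hdR : HasDerivWithinAt f dR (Set.Ici μ) μ)
    (hjump : dR - dL ≠ 0)
    (j : ℤ) (hμ1 : X j ≤ μ) (hμ2 : μ ≤ (X j + X (j + 1)) / 2)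
    (hcrit : hmax < |dR - dL| / (4 * M₂))
    (hcond : (X (j + 1) - μ) / (X (j + 1) - X (j - 1))
        - (μ - X j) / (X (j + 2) - X j) > 1 / 4) :
    |Dd X f j| < |Dd X f (j - 1)| := by
  have h01 : X (j - 1) < X j := hX (by omega)
  have h12 : X j < X (j + 1) := hX (by omega)
  have h23 : X (j + 1) < X (j + 2) := hX (by omega)
  have hμ2' : μ < X (j + 1) := by linarith
  have hp1 : X (j + 1) - X j ≤ hmax := by
    have := hhi (j + 1)
    rwa [show j + 1 - 1 = j from by ring] at this
  have hmaxpos : 0 < hmax := lt_of_lt_of_le (by linarith) hp1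
  have hM2nn : 0 ≤ M₂ := le_trans (abs_nonneg _) (hM (μ + 1) (by linarith))
  have hM2pos : 0 < M₂ := by
    rcases hM2nn.lt_or_eq with h | h
    · exact h
    · exfalso
      rw [← h] at hcrit
      simp at hcrit
      linarith
  have hJpos : 0 < |dR - dL| := abs_pos.mpr hjump
  set φ : ℝ → ℝ := fun x => max (x - μ) 0 with hφdef
  set g : ℝ → ℝ := fun y => f y - (dR - dL) * max (y - μ) 0 with hgdef
  have hgder : ∀ x, HasDerivAt g (Gfun f' μ dL dR x) x :=
    g_deriv f f' μ dL dR hd1 hdL hdR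
  have hGlip := Gfun_lip f f' f'' μ M₂ dL dR hf hd1 hd2 hM hM2nn hdL hdR
  have hdd : ∀ i : ℤ, |Dd X g i| ≤ M₂ / 2 := by
    intro i
    have ha : X i < X (i + 1) := hX (by omega)
    have hb : X (i + 1) < X (i + 2) := hX (by omega)
    have := dd_bound g (Gfun f' μ dL dR) hgder M₂ hGlip (X i) (X (i + 1)) (X (i + 2)) ha hb
    simpa [Dd] using this
  have hsplit : ∀ i : ℤ, Dd X f i = Dd X g i + (dR - dL) * Dd X φ i := by
    intro i
    simp only [Dd, hgdef, hφdef]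
    ring
  -- φ values
  have v0 : φ (X (j - 1)) = 0 := max_eq_right (by linarith)
  have v1 : φ (X j) = 0 := max_eq_right (by linarith)
  have v2 : φ (X (j + 1)) = X (j + 1) - μ := max_eq_left (by linarith)
  have v3 : φ (X (j + 2)) = X (j + 2) - μ := max_eq_left (by linarith)
  set A : ℝ := (X (j + 1) - μ) / ((X (j + 1) - X j) * (X (j + 1) - X (j - 1))) with hAdef
  set B : ℝ := (μ - X j) / ((X (j + 1) - X j) * (X (j + 2) - X j)) with hBdef
  have e1 : j - 1 + 1 = j := by ring
  have e2 : j - 1 + 2 = j + 1 := by ring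
  have hφA : Dd X φ (j - 1) = A := by
    simp only [Dd, e1, e2, v0, v1, v2]
    simp [hAdef]
  have n1 : X (j + 1) - X j ≠ 0 := ne_of_gt (by linarith)
  have n2 : X (j + 2) - X (j + 1) ≠ 0 := ne_of_gt (by linarith)
  have n3 : X (j + 2) - X j ≠ 0 := ne_of_gt (by linarith)
  have n4 : X (j + 1) - X (j - 1) ≠ 0 := ne_of_gt (by linarith)
  have hφB : Dd X φ j = B := by
    simp only [Dd, v1, v2, v3]
    rw [hBdef]
    field_simp
    ring
  have hsA : 0 ≤ A := by
    rw [hAdef]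
    exact div_nonneg (by linarith) (le_of_lt (mul_pos (by linarith) (by linarith)))
  have hsB : 0 ≤ B := by
    rw [hBdef]
    exact div_nonneg (by linarith) (le_of_lt (mul_pos (by linarith) (by linarith)))
  have hub : |Dd X f j| ≤ M₂ / 2 + |dR - dL| * B := by
    rw [hsplit j, hφB]
    calc |Dd X g j + (dR - dL) * B| ≤ |Dd X g j| + |(dR - dL) * B| := abs_add_le _ _
      _ ≤ M₂ / 2 + |dR - dL| * B := by
          rw [abs_mul, abs_of_nonneg hsB]
          linarith [hdd j]
  have hlb : |dR - dL| * A - M₂ / 2 ≤ |Dd X f (j - 1)| := by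
    rw [hsplit (j - 1), hφA]
    have h := abs_sub_abs_le_abs_sub ((dR - dL) * A) (-(Dd X g (j - 1)))
    simp only [abs_neg, sub_neg_eq_add] at h
    rw [abs_mul, abs_of_nonneg hsA] at h
    have hcomm : (dR - dL) * A + Dd X g (j - 1) = Dd X g (j - 1) + (dR - dL) * A := by ring
    rw [hcomm] at h
    linarith [hdd (j - 1)]
  -- key inequality : M₂ < |dR - dL| * (A - B)
  have hstep1 : M₂ < |dR - dL| / (4 * hmax) := by
    have h1 : hmax * (4 * M₂) < |dR - dL| :=
      (lt_div_iff₀ (by positivity : (0:ℝ) < 4 * M₂)).mp hcrit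
    rw [lt_div_iff₀ (by positivity : (0:ℝ) < 4 * hmax)]
    nlinarith
  have hstep2 : |dR - dL| / (4 * hmax) ≤ |dR - dL| / (4 * (X (j + 1) - X j)) := by
    rw [div_le_div_iff₀ (by linarith) (by linarith)]
    exact mul_le_mul_of_nonneg_left (by linarith) (le_of_lt hJpos)
  have hABval : A - B = ((X (j + 1) - μ) / (X (j + 1) - X (j - 1))
      - (μ - X j) / (X (j + 2) - X j)) / (X (j + 1) - X j) := by
    rw [hAdef, hBdef]
    field_simp
  have hstep3 : |dR - dL| / (4 * (X (j + 1) - X j)) < |dR - dL| * (A - B) := by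
    rw [hABval]
    have h4 : (1:ℝ) / 4 / (X (j + 1) - X j) <
        ((X (j + 1) - μ) / (X (j + 1) - X (j - 1))
          - (μ - X j) / (X (j + 2) - X j)) / (X (j + 1) - X j) :=
      (div_lt_div_iff_of_pos_right (by linarith)).mpr hcond
    calc |dR - dL| / (4 * (X (j + 1) - X j))
        = |dR - dL| * ((1:ℝ) / 4 / (X (j + 1) - X j)) := by
          field_simp
      _ < _ := mul_lt_mul_of_pos_left h4 hJpos
  have hkey : M₂ < |dR - dL| * (A - B) := lt_of_lt_of_le hstep1 (le_of_lt (lt_of_le_of_lt hstep2 hstep3))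
  have hexp : |dR - dL| * (A - B) = |dR - dL| * A - |dR - dL| * B := by ring
  calc |Dd X f j| ≤ M₂ / 2 + |dR - dL| * B := hub
    _ < |dR - dL| * A - M₂ / 2 := by rw [hexp] at hkey; linarith
    _ ≤ |Dd X f (j - 1)| := hlb
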